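/- arXiv:1407.6845 — 2 statements merged into one kernel-verified Lean document; each statement's English description precedes it below -/
import Mathlib

section
/- Sequential composition of differential privacy: if F : T → Dist(U) is (ε₁, δ₁)-differentially private w.r.t. adjacency Φ, and for each u ∈ U, G(·, u) : T → Dist(V) is such that for adjacent inputs t₁ Φ t₂ and every output set E ⊆ V in common, Pr[G(t₁,u) ∈ E] ≤ exp(ε₂)·Pr[G(t₂,u) ∈ E] + δ₂, then the composed mechanism t ↦ bind (F t) (λ u. G(t, u)) is (ε₁ + ε₂, δ₁ + δ₂)-differentially private w.r.t. Φ. -/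
open scoped ENNReal

/-- Probability of an event `E` under a discrete distribution `μ`. -/
noncomputable def Pr {U : Type*} (μ : U → ℝ≥0∞) (E : Set U) : ℝ≥0∞ :=
  ∑' x, E.indicator μ x

/-- The ε-distance `Δ_ε(μ₁, μ₂)`; ENNReal subtraction is truncated at 0,
implementing the `max(0, ·)` cap. -/
noncomputable def epsDist {U : Type*} (ε : ℝ) (μ₁ μ₂ : U → ℝ≥0∞) : ℝ≥0∞ :=
  ⨆ E : Set U, (Pr μ₁ E - ENNReal.ofReal (Real.exp ε) * Pr μ₂ E)

/-- Monadic bind of discrete distributions. -/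
noncomputable def dbind {U V : Type*} (μ : U → ℝ≥0∞) (f : U → V → ℝ≥0∞) : V → ℝ≥0∞ :=
  fun v => ∑' u, μ u * f u v

/-! If `p₁ u, p₂ u` are the probabilities of `E` under `G t₁ u, G t₂ u`, the hypothesis on `G`
gives `p₁ ≤ g + δ₂` with `g = min 1 (exp ε₂ · p₂)`. A bound `Pr μ₁ E ≤ e · Pr μ₂ E + δ` on events,
i.e. on indicator test functions, extends to every test function `g ≤ 1`:
`∑ μ₁ g ≤ e ∑ μ₂ g + ∑ (μ₁ - e μ₂)⁺`, and the positive part sums to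
`Pr μ₁ S - e Pr μ₂ S ≤ δ` for `S = {e μ₂ ≤ μ₁}`. Applying this to `μᵢ = F tᵢ` gives the bound. -/

section

variable {U V : Type*}

lemma Pr_le_tsum (μ : U → ℝ≥0∞) (E : Set U) : Pr μ E ≤ ∑' u, μ u :=
  ENNReal.tsum_le_tsum (Set.indicator_le_self E μ)

lemma Pr_dbind (μ : U → ℝ≥0∞) (f : U → V → ℝ≥0∞) (E : Set V) :
    Pr (dbind μ f) E = ∑' u, μ u * Pr (f u) E := by
  simp only [Pr, ← ENNReal.tsum_mul_left]
  rw [ENNReal.tsum_comm]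
  refine tsum_congr fun v => ?_
  by_cases hv : v ∈ E <;> simp [hv, dbind]

lemma tsum_tsub_mul_add_mul_Pr (μ₁ μ₂ : U → ℝ≥0∞) (e : ℝ≥0∞) :
    ∑' u, (μ₁ u - e * μ₂ u) + e * Pr μ₂ {u | e * μ₂ u ≤ μ₁ u} =
      Pr μ₁ {u | e * μ₂ u ≤ μ₁ u} := by
  rw [Pr, Pr, ← ENNReal.tsum_mul_left, ← ENNReal.tsum_add]
  refine tsum_congr fun u => ?_
  by_cases hu : e * μ₂ u ≤ μ₁ u
  · simp [hu, tsub_add_cancel_of_le hu]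
  · simp [hu, tsub_eq_zero_of_le (not_le.mp hu).le]

lemma tsum_tsub_le_of_Pr_le {μ₁ μ₂ : U → ℝ≥0∞} {e δ : ℝ≥0∞} (hμ₂ : ∑' u, μ₂ u ≠ ∞) (he : e ≠ ∞)
    (hdp : ∀ E, Pr μ₁ E ≤ e * Pr μ₂ E + δ) :
    ∑' u, (μ₁ u - e * μ₂ u) ≤ δ := by
  set S := {u | e * μ₂ u ≤ μ₁ u}
  have hfin : e * Pr μ₂ S ≠ ∞ :=
    ENNReal.mul_ne_top he (ne_top_of_le_ne_top hμ₂ (Pr_le_tsum μ₂ S))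
  refine (ENNReal.add_le_add_iff_right hfin).mp ?_
  rw [tsum_tsub_mul_add_mul_Pr, add_comm δ]
  exact hdp S

lemma tsum_mul_le_of_Pr_le {μ₁ μ₂ : U → ℝ≥0∞} {e δ : ℝ≥0∞} (hμ₂ : ∑' u, μ₂ u ≠ ∞) (he : e ≠ ∞)
    (hdp : ∀ E, Pr μ₁ E ≤ e * Pr μ₂ E + δ) {g : U → ℝ≥0∞} (hg : ∀ u, g u ≤ 1) :
    ∑' u, μ₁ u * g u ≤ e * ∑' u, μ₂ u * g u + δ := by
  have hpoint : ∀ u, μ₁ u * g u ≤ e * (μ₂ u * g u) + (μ₁ u - e * μ₂ u) := fun u =>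
    calc μ₁ u * g u ≤ (e * μ₂ u + (μ₁ u - e * μ₂ u)) * g u := by gcongr; exact le_add_tsub
      _ = e * (μ₂ u * g u) + (μ₁ u - e * μ₂ u) * g u := by ring
      _ ≤ e * (μ₂ u * g u) + (μ₁ u - e * μ₂ u) := by gcongr; exact mul_le_of_le_one_right' (hg u)
  calc ∑' u, μ₁ u * g u ≤ ∑' u, (e * (μ₂ u * g u) + (μ₁ u - e * μ₂ u)) :=
        ENNReal.tsum_le_tsum hpoint
    _ = e * ∑' u, μ₂ u * g u + ∑' u, (μ₁ u - e * μ₂ u) := by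
        rw [ENNReal.tsum_add, ENNReal.tsum_mul_left]
    _ ≤ e * ∑' u, μ₂ u * g u + δ := by gcongr; exact tsum_tsub_le_of_Pr_le hμ₂ he hdp

lemma Pr_dbind_le {μ₁ μ₂ : U → ℝ≥0∞} {f₁ f₂ : U → V → ℝ≥0∞} {e₁ e₂ δ₁ δ₂ : ℝ≥0∞}
    (hμ₁ : ∑' u, μ₁ u ≤ 1) (hμ₂ : ∑' u, μ₂ u ≠ ∞) (hf₁ : ∀ u, ∑' v, f₁ u v ≤ 1) (he₁ : e₁ ≠ ∞)
    (hμ : ∀ E, Pr μ₁ E ≤ e₁ * Pr μ₂ E + δ₁) (hf : ∀ u E, Pr (f₁ u) E ≤ e₂ * Pr (f₂ u) E + δ₂)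
    (E : Set V) :
    Pr (dbind μ₁ f₁) E ≤ e₁ * e₂ * Pr (dbind μ₂ f₂) E + (δ₁ + δ₂) := by
  set g : U → ℝ≥0∞ := fun u => min 1 (e₂ * Pr (f₂ u) E)
  have hf₁g : ∀ u, Pr (f₁ u) E ≤ g u + δ₂ := fun u => by
    rw [← min_add_add_right]
    exact le_min (le_add_right ((Pr_le_tsum _ _).trans (hf₁ u))) (hf u E)
  calc Pr (dbind μ₁ f₁) E = ∑' u, μ₁ u * Pr (f₁ u) E := Pr_dbind μ₁ f₁ E
    _ ≤ ∑' u, (μ₁ u * g u + δ₂ * μ₁ u) :=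
        ENNReal.tsum_le_tsum fun u => by grw [hf₁g u, mul_add, mul_comm (μ₁ u) δ₂]
    _ = ∑' u, μ₁ u * g u + δ₂ * ∑' u, μ₁ u := by rw [ENNReal.tsum_add, ENNReal.tsum_mul_left]
    _ ≤ e₁ * ∑' u, μ₂ u * g u + δ₁ + δ₂ := by
        grw [tsum_mul_le_of_Pr_le hμ₂ he₁ hμ fun u => min_le_left _ _, hμ₁, mul_one]
    _ ≤ e₁ * ∑' u, μ₂ u * (e₂ * Pr (f₂ u) E) + δ₁ + δ₂ := by
        gcongr with u; exact min_le_right _ _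
    _ = e₁ * e₂ * Pr (dbind μ₂ f₂) E + (δ₁ + δ₂) := by
        rw [Pr_dbind, mul_assoc, ← ENNReal.tsum_mul_left (a := e₂), add_assoc]
        congr 3 with u
        ring

end

theorem dp_seq_composition_general {T U V : Type*}
    (Φ : T → T → Prop) (F : T → U → ℝ≥0∞) (G : T → U → V → ℝ≥0∞)
    (hFdist : ∀ t, ∑' u, F t u = 1) (hGdist : ∀ t u, ∑' v, G t u v = 1)
    (ε₁ ε₂ δ₁ δ₂ : ℝ) (hδ₁ : 0 ≤ δ₁) (hδ₂ : 0 ≤ δ₂)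
    (hF : ∀ t₁ t₂, Φ t₁ t₂ → ∀ E : Set U,
      Pr (F t₁) E ≤ ENNReal.ofReal (Real.exp ε₁) * Pr (F t₂) E + ENNReal.ofReal δ₁)
    (hG : ∀ u t₁ t₂, Φ t₁ t₂ → ∀ E : Set V,
      Pr (G t₁ u) E ≤ ENNReal.ofReal (Real.exp ε₂) * Pr (G t₂ u) E + ENNReal.ofReal δ₂) :
    ∀ t₁ t₂, Φ t₁ t₂ → ∀ E : Set V,
      Pr (dbind (F t₁) (G t₁)) E ≤
        ENNReal.ofReal (Real.exp (ε₁ + ε₂)) * Pr (dbind (F t₂) (G t₂)) E +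
          ENNReal.ofReal (δ₁ + δ₂) := by
  intro t₁ t₂ hΦ E
  rw [Real.exp_add, ENNReal.ofReal_mul (Real.exp_nonneg _), ENNReal.ofReal_add hδ₁ hδ₂]
  exact Pr_dbind_le (hFdist t₁).le (by simp [hFdist]) (fun u => (hGdist t₁ u).le)
    ENNReal.ofReal_ne_top (hF t₁ t₂ hΦ) (fun u => hG u t₁ t₂ hΦ) E

theorem dp_seq_composition {T U V : Type*} [Countable U] [Countable V]
    (Φ : T → T → Prop) (F : T → U → ℝ≥0∞) (G : T → U → V → ℝ≥0∞)
    (hFdist : ∀ t, ∑' u, F t u = 1) (hGdist : ∀ t u, ∑' v, G t u v = 1)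
    (ε₁ ε₂ δ₁ δ₂ : ℝ) (hε₁ : 0 ≤ ε₁) (hε₂ : 0 ≤ ε₂) (hδ₁ : 0 ≤ δ₁) (hδ₂ : 0 ≤ δ₂)
    (hF : ∀ t₁ t₂, Φ t₁ t₂ → ∀ E : Set U,
      Pr (F t₁) E ≤ ENNReal.ofReal (Real.exp ε₁) * Pr (F t₂) E + ENNReal.ofReal δ₁)
    (hG : ∀ u t₁ t₂, Φ t₁ t₂ → ∀ E : Set V,
      Pr (G t₁ u) E ≤ ENNReal.ofReal (Real.exp ε₂) * Pr (G t₂ u) E + ENNReal.ofReal δ₂) :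
    ∀ t₁ t₂, Φ t₁ t₂ → ∀ E : Set V,
      Pr (dbind (F t₁) (G t₁)) E ≤
        ENNReal.ofReal (Real.exp (ε₁ + ε₂)) * Pr (dbind (F t₂) (G t₂)) E +
          ENNReal.ofReal (δ₁ + δ₂) :=
  dp_seq_composition_general Φ F G hFdist hGdist ε₁ ε₂ δ₁ δ₂ hδ₁ hδ₂ hF hG
end

section
/- The Laplace mechanism is differentially private: for the Laplace distribution with parameter ε > 0 whose density is F(ν) = (ε/2)·exp(−ε|ν|), and any two real inputs x₁, x₂, the distributions of x₁ + ν and x₂ + ν satisfy: for every measurable set E ⊆ ℝ, Pr[x₁ + ν ∈ E] ≤ exp(ε·|x₁ − x₂|)·Pr[x₂ + ν ∈ E]. -/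
open scoped ENNReal

/-- Density of the Laplace distribution with parameter ε. -/
noncomputable def lapDensity (ε : ℝ) (ν : ℝ) : ℝ := (ε / 2) * Real.exp (-ε * |ν|)

theorem laplace_mechanism_private (ε : ℝ) (hε : 0 < ε) (x₁ x₂ : ℝ)
    (E : Set ℝ) (hE : MeasurableSet E) :
    ∫⁻ t in E, ENNReal.ofReal (lapDensity ε (t - x₁)) ≤
      ENNReal.ofReal (Real.exp (ε * |x₁ - x₂|)) *
        ∫⁻ t in E, ENNReal.ofReal (lapDensity ε (t - x₂)) := by
  rw [← MeasureTheory.lintegral_const_mul' _ _ (by simp)]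
  apply MeasureTheory.lintegral_mono
  intro t
  simp only []
  rw [← ENNReal.ofReal_mul (Real.exp_nonneg _)]
  apply ENNReal.ofReal_le_ofReal
  unfold lapDensity
  rw [show Real.exp (ε * |x₁ - x₂|) * (ε / 2 * Real.exp (-ε * |t - x₂|)) =
      ε / 2 * Real.exp (ε * |x₁ - x₂| + -ε * |t - x₂|) by rw [Real.exp_add]; ring]
  apply mul_le_mul_of_nonneg_left _ (by positivity)
  apply Real.exp_le_exp.2
  have h : |t - x₁| ≥ |t - x₂| - |x₁ - x₂| := by
    have := abs_sub_abs_le_abs_sub (t - x₂) (t - x₁)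
    have h2 : (t - x₂) - (t - x₁) = x₁ - x₂ := by ring
    rw [h2] at this
    linarith
  nlinarith [hε.le]
end
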